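/- Either b = 0 and a is unitary (a*a = aa* = 1), or the spectrum of a a* in 𝒜 equals {1} ∪ {1 − q^{2k} : k ∈ ℕ}. -/

import Mathlib

/-!
Put `x = b* b`. The relations say `a a* = 1 - x` and `a* a = 1 - q² x`. As `a a*` and `a* a` have
the same nonzero spectrum and are positive, `σ(x)` is a compact subset of `[0, 1]` that is stable
under `t ↦ q² t` and whose points other than `1` all lie in `q² σ(x)`. When `b ≠ 0`, `σ(x)` has a
positive point, so its maximum must be `1`; then `σ(x)` contains every `q^{2k}` and their limit `0`,
and nothing else. Finally `σ(a a*) = 1 - σ(x)`.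
-/

open Set Filter

namespace spectrum

variable {𝕜 A : Type*} [Field 𝕜] [Ring A] [Algebra 𝕜 A]

lemma one_sub_mul_mem_one_sub_smul_iff {r t : 𝕜} {x : A} (hr : r ≠ 0) :
    1 - r * t ∈ spectrum 𝕜 (1 - r • x) ↔ t ∈ spectrum 𝕜 x := by
  have h : algebraMap 𝕜 A (1 - r * t) - (1 - r • x) =
      Units.mk0 (-r) (neg_ne_zero.2 hr) • (algebraMap 𝕜 A t - x) := by
    simp only [Units.smul_def, Units.val_mk0, Algebra.algebraMap_eq_smul_one]
    module
  rw [mem_iff, mem_iff, h, isUnit_smul_iff]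

lemma one_sub_mem_one_sub_iff {t : 𝕜} {x : A} :
    1 - t ∈ spectrum 𝕜 (1 - x) ↔ t ∈ spectrum 𝕜 x := by
  simpa using one_sub_mul_mem_one_sub_smul_iff (x := x) (t := t) one_ne_zero

lemma one_sub_eq_image (x : A) : spectrum 𝕜 (1 - x) = (1 - ·) '' spectrum 𝕜 x := by
  rw [← map_one (algebraMap 𝕜 A), ← singleton_sub_eq, singleton_sub]

variable {u v x : A} {r t : 𝕜}

/-- `uv` and `vu` have the same nonzero spectrum, so the maps `t ↦ 1 - t` and `t ↦ 1 - r t` carry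
`σ x` to the same set away from `0`. -/
lemma exists_mem_eq_mul_of_mul_eq_one_sub (hr : r ≠ 0) (huv : u * v = 1 - x)
    (hvu : v * u = 1 - r • x) (ht : t ∈ spectrum 𝕜 x) (ht1 : t ≠ 1) :
    ∃ s ∈ spectrum 𝕜 x, t = r * s := by
  have hmem : 1 - t ∈ spectrum 𝕜 (u * v) \ {0} :=
    ⟨huv ▸ one_sub_mem_one_sub_iff.2 ht, sub_ne_zero.2 ht1.symm⟩
  rw [nonzero_mul_comm, hvu] at hmem
  refine ⟨t / r, (one_sub_mul_mem_one_sub_smul_iff hr).1 ?_, (mul_div_cancel₀ t hr).symm⟩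
  rw [mul_div_cancel₀ t hr]
  exact hmem.1

lemma mul_mem_of_mul_eq_one_sub (hr : r ≠ 0) (huv : u * v = 1 - x)
    (hvu : v * u = 1 - r • x) (ht : t ∈ spectrum 𝕜 x) (hrt : r * t ≠ 1) :
    r * t ∈ spectrum 𝕜 x := by
  have hmem : 1 - r * t ∈ spectrum 𝕜 (v * u) \ {0} :=
    ⟨hvu ▸ (one_sub_mul_mem_one_sub_smul_iff hr).2 ht, sub_ne_zero.2 hrt.symm⟩
  rw [nonzero_mul_comm, huv] at hmem
  exact one_sub_mem_one_sub_iff.1 hmem.1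

end spectrum

section GeometricSet

variable {r : ℝ} {T : Set ℝ}

lemma one_mem_of_forall_ne_one_eq_mul (hr0 : 0 ≤ r) (hr1 : r < 1) (hT : IsCompact T)
    (hdiv : ∀ t ∈ T, t ≠ 1 → ∃ s ∈ T, t = r * s) (hpos : ∃ t ∈ T, 0 < t) : 1 ∈ T := by
  obtain ⟨t, htT, ht⟩ := hpos
  have hmax : sSup T ∈ T := hT.sSup_mem ⟨t, htT⟩
  have hmax_pos : 0 < sSup T := ht.trans_le (le_csSup hT.bddAbove htT)
  by_contra h1
  obtain ⟨s, hsT, hs⟩ := hdiv _ hmax (ne_of_mem_of_not_mem hmax h1)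
  have : s ≤ sSup T := le_csSup hT.bddAbove hsT
  nlinarith

lemma pow_mem_of_forall_mul_mem (hmul : ∀ t ∈ T, r * t ∈ T) (h1 : 1 ∈ T) (k : ℕ) :
    r ^ k ∈ T := by
  induction k with
  | zero => simpa using h1
  | succ k ih => simpa [pow_succ', mul_comm] using hmul _ ih

/-- A point of `T ⊆ [0, 1]` that is not a power of `r` can be divided by `r` inside `T`
forever, so it lies below every `r ^ n`. -/
lemma eq_zero_or_exists_eq_pow (hr0 : 0 ≤ r) (hr1 : r < 1) (hT : T ⊆ Icc 0 1)
    (hdiv : ∀ t ∈ T, t ≠ 1 → ∃ s ∈ T, t = r * s) {t : ℝ} (ht : t ∈ T) :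
    t = 0 ∨ ∃ k : ℕ, t = r ^ k := by
  by_contra! h
  have hchain : ∀ n : ℕ, ∃ s ∈ T, t = r ^ n * s := by
    intro n
    induction n with
    | zero => exact ⟨t, ht, by simp⟩
    | succ n ih =>
      obtain ⟨s, hsT, rfl⟩ := ih
      have hs1 : s ≠ 1 := by rintro rfl; exact h.2 n (mul_one _)
      obtain ⟨s', hs'T, rfl⟩ := hdiv s hsT hs1
      exact ⟨s', hs'T, by ring⟩
  have hle : ∀ n : ℕ, t ≤ r ^ n := fun n ↦ by
    obtain ⟨s, hsT, rfl⟩ := hchain n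
    exact mul_le_of_le_one_right (pow_nonneg hr0 n) (hT hsT).2
  have : t ≤ 0 := ge_of_tendsto' (tendsto_pow_atTop_nhds_zero_of_lt_one hr0 hr1) hle
  exact h.1 (this.antisymm (hT ht).1)

lemma eq_insert_zero_range_pow (hr0 : 0 ≤ r) (hr1 : r < 1) (hT : IsCompact T)
    (hT01 : T ⊆ Icc 0 1) (hdiv : ∀ t ∈ T, t ≠ 1 → ∃ s ∈ T, t = r * s)
    (hmul : ∀ t ∈ T, r * t ∈ T) (hpos : ∃ t ∈ T, 0 < t) :
    T = insert 0 (range (r ^ ·)) := by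
  have hpow :=
    pow_mem_of_forall_mul_mem hmul (one_mem_of_forall_ne_one_eq_mul hr0 hr1 hT hdiv hpos)
  have h0 : 0 ∈ T := hT.isClosed.mem_of_tendsto
    (tendsto_pow_atTop_nhds_zero_of_lt_one hr0 hr1) (Eventually.of_forall hpow)
  refine Subset.antisymm (fun t ht ↦ ?_) (insert_subset h0 (range_subset_iff.2 hpow))
  rcases eq_zero_or_exists_eq_pow hr0 hr1 hT01 hdiv ht with rfl | ⟨k, rfl⟩
  exacts [mem_insert _ _, mem_insert_of_mem _ (mem_range_self k)]

end GeometricSet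

section CStarAlgebra

variable {A : Type*} [CStarAlgebra A] {a b : A} {r : ℝ}

lemma exists_pos_mem_spectrum_star_mul_self (hb : b ≠ 0) :
    ∃ t ∈ spectrum ℝ (star b * b), 0 < t := by
  have : Nontrivial A := nontrivial_of_ne b 0 hb
  have hx : 0 < ‖star b * b‖ :=
    norm_pos_iff.2 fun h ↦ hb (CStarRing.star_mul_self_eq_zero_iff b |>.1 h)
  rcases CStarAlgebra.norm_or_neg_norm_mem_spectrum (IsSelfAdjoint.star_mul_self b) with h | h
  · exact ⟨_, h, hx⟩
  · linarith [spectrum_star_mul_self_nonneg _ h]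

lemma spectrum_star_mul_self_subset_Icc (haa : a * star a = 1 - star b * b) :
    spectrum ℝ (star b * b) ⊆ Icc 0 1 := by
  intro t ht
  have h : 1 - t ∈ spectrum ℝ (star (star a) * star a) := by
    rw [star_star, haa]
    exact spectrum.one_sub_mem_one_sub_iff.2 ht
  exact ⟨spectrum_star_mul_self_nonneg t ht, sub_nonneg.1 (spectrum_star_mul_self_nonneg _ h)⟩

lemma spectrum_star_mul_self_eq_insert_zero_range_pow (hr0 : 0 < r) (hr1 : r < 1)
    (haa : a * star a = 1 - star b * b) (hsa : star a * a = 1 - r • (star b * b))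
    (hb : b ≠ 0) :
    spectrum ℝ (star b * b) = insert 0 (range (r ^ ·)) := by
  have hT01 := spectrum_star_mul_self_subset_Icc haa
  refine eq_insert_zero_range_pow hr0.le hr1 (spectrum.isCompact _) hT01
    (fun t ht ht1 ↦ spectrum.exists_mem_eq_mul_of_mul_eq_one_sub hr0.ne' haa hsa ht ht1)
    (fun t ht ↦ spectrum.mul_mem_of_mul_eq_one_sub hr0.ne' haa hsa ht ?_)
    (exists_pos_mem_spectrum_star_mul_self hb)
  obtain ⟨-, ht1⟩ := hT01 ht
  nlinarith

end CStarAlgebra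

theorem spectrum_aastar_SUq2_general
    {𝒜 : Type*} [NormedRing 𝒜] [StarRing 𝒜] [CStarRing 𝒜]
    [NormedAlgebra ℂ 𝒜] [CompleteSpace 𝒜] [StarModule ℂ 𝒜]
    (q : ℝ) (hq0 : 0 < q) (hq1 : q < 1) (a b : 𝒜)
    (h3 : b * star b = star b * b)
    (h4 : star a * a + ((q : ℂ) ^ 2) • (star b * b) = 1)
    (h5 : a * star a + b * star b = 1) :
    (b = 0 ∧ star a * a = 1 ∧ a * star a = 1) ∨
      spectrum ℂ (a * star a)
        = ({1} : Set ℂ) ∪ {z : ℂ | ∃ k : ℕ, z = 1 - (q : ℂ) ^ (2 * k)} := by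
  let : CStarAlgebra 𝒜 := { }
  by_cases hb : b = 0
  · subst hb
    simp only [star_zero, mul_zero, smul_zero, add_zero] at h4 h5
    exact .inl ⟨rfl, h4, h5⟩
  have haa : a * star a = 1 - star b * b := eq_sub_of_add_eq (h3 ▸ h5)
  have hsa : star a * a = 1 - (q ^ 2 : ℝ) • (star b * b) := by
    rw [RCLike.real_smul_eq_coe_smul (K := ℂ)]
    push_cast
    exact eq_sub_of_add_eq h4
  have hX := spectrum_star_mul_self_eq_insert_zero_range_pow (by positivity) (by nlinarith)
    haa hsa hb
  have hreal : spectrum ℂ (a * star a) = (↑) '' spectrum ℝ (a * star a) :=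
    (IsSelfAdjoint.mul_star_self a).spectrumRestricts.algebraMap_image.symm
  right
  rw [hreal, haa, spectrum.one_sub_eq_image, hX]
  ext z
  simp [pow_mul, eq_comm]

/-- In a unital C*-algebra `𝒜` with elements `a, b` satisfying the defining
relations of `SU_q(2)` (for a fixed real `0 < q < 1`), either `b = 0` and `a` is unitary,
or the spectrum of `a a*` equals `{1} ∪ {1 - q^(2k) : k ∈ ℕ}`. -/
theorem spectrum_aastar_SUq2
    {𝒜 : Type*} [NormedRing 𝒜] [StarRing 𝒜] [CStarRing 𝒜]
    [NormedAlgebra ℂ 𝒜] [CompleteSpace 𝒜] [StarModule ℂ 𝒜]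
    (q : ℝ) (hq0 : 0 < q) (hq1 : q < 1) (a b : 𝒜)
    (h1 : b * a = (q : ℂ) • (a * b))
    (h2 : star b * a = (q : ℂ) • (a * star b))
    (h3 : b * star b = star b * b)
    (h4 : star a * a + ((q : ℂ) ^ 2) • (star b * b) = 1)
    (h5 : a * star a + b * star b = 1) :
    (b = 0 ∧ star a * a = 1 ∧ a * star a = 1) ∨
      spectrum ℂ (a * star a)
        = ({1} : Set ℂ) ∪ {z : ℂ | ∃ k : ℕ, z = 1 - (q : ℂ) ^ (2 * k)} :=
  spectrum_aastar_SUq2_general q hq0 hq1 a b h3 h4 h5
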